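/- (Failure of the fully weak demiclosedness principle.) Let X = ℓ²(ℕ), let C = {x ∈ X : ‖x‖ ≤ 1}, let (e_n)_{n∈ℕ} be the standard unit vectors, set z_n = e_0 + e_n for each n ∈ ℕ, and set T = Id − P_C. Then T is firmly nonexpansive, z_n ⇀ e_0, and z_n − T z_n = P_C z_n ⇀ (1/√2) e_0, yet e_0 − T e_0 = P_C e_0 = e_0 ≠ (1/√2) e_0. Hence the implication (z_n ⇀ z and z_n − T z_n ⇀ x ⟹ z − T z = x) fails for firmly nonexpansive T. -/

import Mathlib

/-!
The projection onto the ball satisfies the variational inequality, which makes it firmly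
nonexpansive, and firm nonexpansiveness passes from `P` to `Id - P`. The orthonormal vectors `eₙ`
converge weakly to `0` by Bessel's inequality, so `e₀ + eₙ ⇀ e₀`. For `n ≠ 0` these vectors have
norm `√2`, so their projections `(e₀ + eₙ) / √2` converge weakly to `e₀ / √2`, while `e₀` itself
lies in the ball and is fixed by the projection.
-/

open Filter Topology RealInnerProductSpace

/-- The real Hilbert space `ℓ²(ℕ)`. -/
noncomputable abbrev ellTwo : Type := lp (fun _ : ℕ => ℝ) 2

/-- The standard unit vectors of `ℓ²(ℕ)`. -/
noncomputable def stdVec (n : ℕ) : ellTwo := lp.single 2 n (1 : ℝ)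

/-- The metric projection onto the closed unit ball of `ℓ²(ℕ)`. -/
noncomputable def ballProj (x : ellTwo) : ellTwo :=
  if ‖x‖ ≤ 1 then x else ‖x‖⁻¹ • x

/-- Firm nonexpansiveness of an operator on `ℓ²(ℕ)`. -/
def FirmlyNonexpansive (T : ellTwo → ellTwo) : Prop :=
  ∀ a b : ellTwo, ‖T a - T b‖ ^ 2 + ‖(a - T a) - (b - T b)‖ ^ 2 ≤ ‖a - b‖ ^ 2

section InnerProductSpace

variable {E : Type*} [NormedAddCommGroup E] [InnerProductSpace ℝ E]

def WeakTendsto (u : ℕ → E) (x : E) : Prop :=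
  ∀ w : E, Tendsto (fun n => ⟪u n, w⟫) atTop (𝓝 ⟪x, w⟫)

theorem WeakTendsto.add {u v : ℕ → E} {x y : E} (hu : WeakTendsto u x) (hv : WeakTendsto v y) :
    WeakTendsto (fun n => u n + v n) (x + y) := fun w => by
  simpa only [inner_add_left] using (hu w).add (hv w)

theorem WeakTendsto.const_smul {u : ℕ → E} {x : E} (hu : WeakTendsto u x) (c : ℝ) :
    WeakTendsto (fun n => c • u n) (c • x) := fun w => by
  simpa only [real_inner_smul_left] using (hu w).const_mul c

theorem weakTendsto_const (x : E) : WeakTendsto (fun _ => x) x := fun _ => tendsto_const_nhds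

theorem WeakTendsto.congr' {u v : ℕ → E} {x : E} (huv : u =ᶠ[atTop] v) (hu : WeakTendsto u x) :
    WeakTendsto v x := fun w =>
  (hu w).congr' (huv.mono fun n h => by rw [h])

theorem Orthonormal.weakTendsto_zero {v : ℕ → E} (hv : Orthonormal ℝ v) : WeakTendsto v 0 := by
  intro w
  have hsq := (hv.inner_products_summable (x := w)).tendsto_atTop_zero.sqrt
  simp only [Real.sqrt_sq (norm_nonneg _), Real.sqrt_zero] at hsq
  simpa only [inner_zero_left] using tendsto_zero_iff_norm_tendsto_zero.2 hsq

theorem norm_sub_sq_add_norm_sub_sub_sq_le {a b p q : E}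
    (ha : ⟪a - p, q - p⟫ ≤ 0) (hb : ⟪b - q, p - q⟫ ≤ 0) :
    ‖p - q‖ ^ 2 + ‖(a - p) - (b - q)‖ ^ 2 ≤ ‖a - b‖ ^ 2 := by
  have hcross : 0 ≤ ⟪(a - p) - (b - q), p - q⟫ := by
    have hpq : ⟪a - p, p - q⟫ = -⟪a - p, q - p⟫ := by rw [← inner_neg_right, neg_sub]
    rw [inner_sub_left, hpq]
    linarith
  calc ‖p - q‖ ^ 2 + ‖(a - p) - (b - q)‖ ^ 2
      ≤ ‖(a - p) - (b - q)‖ ^ 2 + 2 * ⟪(a - p) - (b - q), p - q⟫ + ‖p - q‖ ^ 2 := by linarith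
    _ = ‖a - b‖ ^ 2 := by rw [← norm_add_sq_real]; congr 2; abel

end InnerProductSpace

theorem FirmlyNonexpansive.id_sub {T : ellTwo → ellTwo} (hT : FirmlyNonexpansive T) :
    FirmlyNonexpansive fun x => x - T x := fun a b => by
  simpa only [sub_sub_cancel, add_comm] using hT a b

theorem orthonormal_stdVec : Orthonormal ℝ stdVec := by
  rw [orthonormal_iff_ite]
  intro i j
  rw [stdVec, lp.inner_single_left, stdVec, lp.single_apply, Pi.single_apply]
  simp

theorem norm_stdVec_add_stdVec {m n : ℕ} (hmn : m ≠ n) : ‖stdVec m + stdVec n‖ = √2 := by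
  rw [← Real.sqrt_sq (norm_nonneg _), norm_add_sq_real, orthonormal_stdVec.2 hmn,
    orthonormal_stdVec.1, orthonormal_stdVec.1]
  norm_num

theorem ballProj_of_norm_le {x : ellTwo} (hx : ‖x‖ ≤ 1) : ballProj x = x := if_pos hx

theorem ballProj_of_one_lt_norm {x : ellTwo} (hx : 1 < ‖x‖) : ballProj x = ‖x‖⁻¹ • x :=
  if_neg hx.not_ge

theorem norm_ballProj_le (x : ellTwo) : ‖ballProj x‖ ≤ 1 := by
  rcases le_or_gt ‖x‖ 1 with hx | hx
  · rwa [ballProj_of_norm_le hx]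
  · rw [ballProj_of_one_lt_norm hx, norm_smul, norm_inv, norm_norm, inv_mul_cancel₀ (by positivity)]

theorem inner_sub_ballProj_sub_ballProj_nonpos (x : ellTwo) {y : ellTwo} (hy : ‖y‖ ≤ 1) :
    ⟪x - ballProj x, y - ballProj x⟫ ≤ 0 := by
  rcases le_or_gt ‖x‖ 1 with hx | hx
  · simp [ballProj_of_norm_le hx]
  · have hxy : ⟪x, y⟫ ≤ ‖x‖ := by nlinarith [real_inner_le_norm x y, norm_nonneg x]
    have hr : 0 ≤ 1 - ‖x‖⁻¹ := sub_nonneg.2 (inv_le_one_of_one_le₀ hx.le)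
    rw [ballProj_of_one_lt_norm hx]
    calc ⟪x - ‖x‖⁻¹ • x, y - ‖x‖⁻¹ • x⟫ = (1 - ‖x‖⁻¹) * (⟪x, y⟫ - ‖x‖) := by
          simp only [inner_sub_left, inner_sub_right, real_inner_smul_left, real_inner_smul_right,
            real_inner_self_eq_norm_sq, norm_smul, norm_inv, norm_norm]
          field_simp
      _ ≤ 0 := mul_nonpos_of_nonneg_of_nonpos hr (sub_nonpos.2 hxy)

theorem firmlyNonexpansive_ballProj : FirmlyNonexpansive ballProj := fun a b =>
  norm_sub_sq_add_norm_sub_sub_sq_le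
    (inner_sub_ballProj_sub_ballProj_nonpos a (norm_ballProj_le b))
    (inner_sub_ballProj_sub_ballProj_nonpos b (norm_ballProj_le a))

theorem ballProj_stdVec_add_stdVec {m n : ℕ} (hmn : m ≠ n) :
    ballProj (stdVec m + stdVec n) = (√2)⁻¹ • (stdVec m + stdVec n) := by
  have hnorm := norm_stdVec_add_stdVec hmn
  rw [ballProj_of_one_lt_norm (by rw [hnorm]; exact Real.one_lt_sqrt_two), hnorm]

theorem weakTendsto_stdVec_add_stdVec (m : ℕ) :
    WeakTendsto (fun n => stdVec m + stdVec n) (stdVec m) := by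
  simpa only [add_zero] using (weakTendsto_const (stdVec m)).add orthonormal_stdVec.weakTendsto_zero

theorem weakTendsto_ballProj_stdVec_add_stdVec (m : ℕ) :
    WeakTendsto (fun n => ballProj (stdVec m + stdVec n)) ((√2)⁻¹ • stdVec m) :=
  ((weakTendsto_stdVec_add_stdVec m).const_smul _).congr' <|
    (eventually_ne_atTop m).mono fun _ hn => (ballProj_stdVec_add_stdVec hn.symm).symm

theorem stdVec_ne_inv_sqrt_two_smul (m : ℕ) : stdVec m ≠ (√2)⁻¹ • stdVec m := by
  intro h
  have hnorm := congrArg norm h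
  rw [norm_smul, orthonormal_stdVec.1, mul_one, norm_inv, Real.norm_of_nonneg (Real.sqrt_nonneg 2)]
    at hnorm
  exact Real.one_lt_sqrt_two.ne' (inv_eq_one.1 hnorm.symm)

theorem fully_weak_demiclosedness_fails
    (z : ℕ → ellTwo) (hz : ∀ n, z n = stdVec 0 + stdVec n)
    (T : ellTwo → ellTwo) (hT : T = fun x => x - ballProj x) :
    FirmlyNonexpansive T ∧
    (∀ w : ellTwo, Tendsto (fun n => ⟪z n, w⟫) atTop (𝓝 ⟪stdVec 0, w⟫)) ∧
    (∀ n, z n - T (z n) = ballProj (z n)) ∧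
    (∀ w : ellTwo, Tendsto (fun n => ⟪z n - T (z n), w⟫) atTop
      (𝓝 ⟪(Real.sqrt 2)⁻¹ • stdVec 0, w⟫)) ∧
    stdVec 0 - T (stdVec 0) = stdVec 0 ∧
    ballProj (stdVec 0) = stdVec 0 ∧
    stdVec 0 ≠ (Real.sqrt 2)⁻¹ • stdVec 0 ∧
    ¬ (∀ T' : ellTwo → ellTwo, FirmlyNonexpansive T' →
        ∀ (zn : ℕ → ellTwo) (zl x : ellTwo),
        (∀ w : ellTwo, Tendsto (fun n => ⟪zn n, w⟫) atTop (𝓝 ⟪zl, w⟫)) →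
        (∀ w : ellTwo,
          Tendsto (fun n => ⟪zn n - T' (zn n), w⟫) atTop (𝓝 ⟪x, w⟫)) →
        zl - T' zl = x) := by
  obtain rfl : z = fun n => stdVec 0 + stdVec n := funext hz
  subst hT
  have hfirm := firmlyNonexpansive_ballProj.id_sub
  have hfix : ballProj (stdVec 0) = stdVec 0 := ballProj_of_norm_le (orthonormal_stdVec.1 0).le
  have hweak : WeakTendsto
      (fun n => stdVec 0 + stdVec n - (stdVec 0 + stdVec n - ballProj (stdVec 0 + stdVec n)))
      ((√2)⁻¹ • stdVec 0) := by
    simpa only [sub_sub_cancel] using weakTendsto_ballProj_stdVec_add_stdVec 0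
  refine ⟨hfirm, weakTendsto_stdVec_add_stdVec 0, fun n => sub_sub_cancel _ _, hweak,
    sub_sub_cancel _ _ |>.trans hfix, hfix, stdVec_ne_inv_sqrt_two_smul 0, fun h => ?_⟩
  refine stdVec_ne_inv_sqrt_two_smul 0 ?_
  simpa only [sub_sub_cancel, hfix] using h _ hfirm _ _ _ (weakTendsto_stdVec_add_stdVec 0) hweak
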